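/- Let A be a Hopf algebra over a commutative ring K with comultiplication Δ and antipode S, let π : A → Matrix n n K be a K-algebra homomorphism, let a ∈ A⊗A satisfy a · Δ(x) = Δ(x) · a for all x ∈ A, and set a_{ij} = (π_{ij} ⊗ id)(a) ∈ A. Then for all x ∈ A and all indices i, j: x · a_{ij} = Σ_{k,l} Σ π_{ik}(S(x₍₁₎)) · π_{lj}(x₍₂₎) • (a_{kl} · x₍₃₎), where the Sweedler sum runs over the iterated comultiplication (Δ ⊗ id)(Δ(x)) = Σ x₍₁₎ ⊗ x₍₂₎ ⊗ x₍₃₎. -/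
import Mathlib


open TensorProduct

/-- `(π_{ij} ⊗ id)(a) ∈ A` for `a ∈ A ⊗ A`: apply the matrix-entry functional
`π_{ij} : A → K`, `x ↦ (π x) i j`, to the first tensor factor (identifying `K ⊗ A ≅ A`). -/
noncomputable def matrixCoeffTensor (K : Type*) {A n : Type*} [CommRing K] [Ring A]
    [HopfAlgebra K A] [Fintype n] [DecidableEq n]
    (π : A →ₐ[K] Matrix n n K) (a : A ⊗[K] A) (i j : n) : A :=
  TensorProduct.lift
    ((LinearMap.lsmul K A) ∘ₗ (Matrix.entryLinearMap K K i j) ∘ₗ π.toLinearMap) a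

/-- The linear functional on `A ⊗ A` induced by `u ⊗ v ↦ (π (S u)) i k · (π v) l j`;
on `Δ(x)` it gives the Sweedler sum `Σ π_{ik}(S(x₍₁₎)) · π_{lj}(x₍₂₎)`. -/
noncomputable def dualRepCoeff (K : Type*) {A n : Type*} [CommRing K] [Ring A]
    [HopfAlgebra K A] [Fintype n] [DecidableEq n]
    (π : A →ₐ[K] Matrix n n K) (i k l j : n) : A ⊗[K] A →ₗ[K] K :=
  TensorProduct.lift
    (((LinearMap.mul K K) ∘ₗ (Matrix.entryLinearMap K K i k) ∘ₗ π.toLinearMap ∘ₗ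
        (HopfAlgebra.antipode (R := K))).compl₂
      ((Matrix.entryLinearMap K K l j) ∘ₗ π.toLinearMap))

section Helpers

variable {K A n : Type*} [CommRing K] [Ring A] [HopfAlgebra K A] [Fintype n] [DecidableEq n]
variable (π : A →ₐ[K] Matrix n n K)

lemma matrixCoeffTensor_tmul (u v : A) (i j : n) :
    matrixCoeffTensor K π (u ⊗ₜ[K] v) i j = (π u) i j • v := by
  simp [matrixCoeffTensor]

lemma lift_compl₂ {M N N' P : Type*} [AddCommMonoid M] [AddCommMonoid N]
    [AddCommMonoid N'] [AddCommMonoid P] [Module K M] [Module K N] [Module K N'] [Module K P]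
    (B : M →ₗ[K] N →ₗ[K] P) (f : N' →ₗ[K] N) :
    TensorProduct.lift (B.compl₂ f) = TensorProduct.lift B ∘ₗ LinearMap.lTensor M f := by
  ext u v; simp

lemma lift_compl₁ {M M' N P : Type*} [AddCommMonoid M] [AddCommMonoid M']
    [AddCommMonoid N] [AddCommMonoid P] [Module K M] [Module K M'] [Module K N] [Module K P]
    (B : M →ₗ[K] N →ₗ[K] P) (f : M' →ₗ[K] M) :
    TensorProduct.lift (B ∘ₗ f) = TensorProduct.lift B ∘ₗ LinearMap.rTensor N f := by
  ext u v; simp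

lemma lift_sum {ι M N P : Type*} [AddCommMonoid M] [AddCommMonoid N] [AddCommMonoid P]
    [Module K M] [Module K N] [Module K P] (s : Finset ι) (B : ι → (M →ₗ[K] N →ₗ[K] P)) :
    TensorProduct.lift (∑ l ∈ s, B l) = ∑ l ∈ s, TensorProduct.lift (B l) := by
  ext u v; simp

lemma compl₂_sum {ι M N N' P : Type*} [AddCommMonoid M] [AddCommMonoid N]
    [AddCommMonoid N'] [AddCommMonoid P] [Module K M] [Module K N] [Module K N'] [Module K P]
    (B : M →ₗ[K] N →ₗ[K] P) (s : Finset ι) (f : ι → (N' →ₗ[K] N)) :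
    B.compl₂ (∑ l ∈ s, f l) = ∑ l ∈ s, B.compl₂ (f l) := by
  ext u v; simp

lemma compl₂_comp_right {M N N' N'' P : Type*} [AddCommMonoid M] [AddCommMonoid N]
    [AddCommMonoid N'] [AddCommMonoid N''] [AddCommMonoid P]
    [Module K M] [Module K N] [Module K N'] [Module K N''] [Module K P]
    (B : M →ₗ[K] N →ₗ[K] P) (g : N' →ₗ[K] N) (f : N'' →ₗ[K] N') :
    B.compl₂ (g ∘ₗ f) = (B.compl₂ g).compl₂ f := rfl

lemma compl₂_comp_left {M M' N N' P : Type*} [AddCommMonoid M] [AddCommMonoid M']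
    [AddCommMonoid N] [AddCommMonoid N'] [AddCommMonoid P]
    [Module K M] [Module K M'] [Module K N] [Module K N'] [Module K P]
    (B : M →ₗ[K] N →ₗ[K] P) (g : N' →ₗ[K] N) (f : M' →ₗ[K] M) :
    (B.compl₂ g) ∘ₗ f = (B ∘ₗ f).compl₂ g := rfl

lemma matrixCoeffTensor_mul_left (a : A ⊗[K] A) (k j : n) (v w : A) :
    matrixCoeffTensor K π (a * (v ⊗ₜ[K] w)) k j
      = ∑ l, (π v) l j • (matrixCoeffTensor K π a k l * w) := by
  induction a using TensorProduct.induction_on with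
  | zero => simp [matrixCoeffTensor]
  | tmul p q =>
      simp only [Algebra.TensorProduct.tmul_mul_tmul, matrixCoeffTensor_tmul, map_mul,
        Matrix.mul_apply, Finset.sum_smul, smul_mul_assoc, smul_smul]
      exact Finset.sum_congr rfl fun l _ => by rw [mul_comm]
  | add p q hp hq =>
      simp only [add_mul, map_add, matrixCoeffTensor, LinearMap.map_add] at *
      rw [hp, hq, ← Finset.sum_add_distrib]
      exact Finset.sum_congr rfl fun l _ => (smul_add _ _ _).symm

lemma matrixCoeffTensor_mul_right (a : A ⊗[K] A) (k j : n) (v w : A) :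
    matrixCoeffTensor K π ((v ⊗ₜ[K] w) * a) k j
      = ∑ l, (π v) k l • (w * matrixCoeffTensor K π a l j) := by
  induction a using TensorProduct.induction_on with
  | zero => simp [matrixCoeffTensor]
  | tmul p q =>
      simp only [Algebra.TensorProduct.tmul_mul_tmul, matrixCoeffTensor_tmul, map_mul,
        Matrix.mul_apply, Finset.sum_smul, mul_smul_comm, smul_smul]
  | add p q hp hq =>
      simp only [mul_add, map_add, matrixCoeffTensor, LinearMap.map_add] at *
      rw [hp, hq, ← Finset.sum_add_distrib]
      exact Finset.sum_congr rfl fun l _ => (smul_add _ _ _).symm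

lemma lift_mul_left (a : A ⊗[K] A) (k j : n) (v w : A) :
    TensorProduct.lift ((LinearMap.lsmul K A) ∘ₗ (Matrix.entryLinearMap K K k j) ∘ₗ
        π.toLinearMap) (a * (v ⊗ₜ[K] w))
      = ∑ l, (π v) l j • (matrixCoeffTensor K π a k l * w) :=
  matrixCoeffTensor_mul_left π a k j v w

lemma lift_mul_right (a : A ⊗[K] A) (k j : n) (v w : A) :
    TensorProduct.lift ((LinearMap.lsmul K A) ∘ₗ (Matrix.entryLinearMap K K k j) ∘ₗ
        π.toLinearMap) ((v ⊗ₜ[K] w) * a)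
      = ∑ l, (π v) k l • (w * matrixCoeffTensor K π a l j) :=
  matrixCoeffTensor_mul_right π a k j v w

lemma step1 (a : A ⊗[K] A) (i j k : n) :
    (∑ l, TensorProduct.lift (((LinearMap.lsmul K A) ∘ₗ dualRepCoeff K π i k l j).compl₂
        (LinearMap.mulLeft K (matrixCoeffTensor K π a k l)))) ∘ₗ
      (TensorProduct.assoc K A A A).symm.toLinearMap
    = TensorProduct.lift
        (((LinearMap.lsmul K A) ∘ₗ (Matrix.entryLinearMap K K i k) ∘ₗ π.toLinearMap ∘ₗ
            HopfAlgebra.antipode (R := K)).compl₂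
          ((TensorProduct.lift ((LinearMap.lsmul K A) ∘ₗ (Matrix.entryLinearMap K K k j) ∘ₗ
              π.toLinearMap)) ∘ₗ LinearMap.mulLeft K a)) := by
  ext u v w
  simp [dualRepCoeff, lift_mul_left, Finset.smul_sum, mul_smul]
  exact Finset.sum_congr rfl fun x _ => smul_comm _ _ _

lemma step4 (a : A ⊗[K] A) (j k : n) :
    (TensorProduct.lift ((LinearMap.lsmul K A) ∘ₗ (Matrix.entryLinearMap K K k j) ∘ₗ
        π.toLinearMap)) ∘ₗ LinearMap.mulRight K a
    = ∑ l, TensorProduct.lift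
        (((LinearMap.lsmul K A) ∘ₗ (Matrix.entryLinearMap K K k l) ∘ₗ π.toLinearMap).compl₂
          (LinearMap.mulRight K (matrixCoeffTensor K π a l j))) := by
  ext v w
  simp [lift_mul_right]

lemma step5 (a : A ⊗[K] A) (i j l : n) :
    (∑ k, TensorProduct.lift
        (((LinearMap.lsmul K A) ∘ₗ (Matrix.entryLinearMap K K i k) ∘ₗ π.toLinearMap ∘ₗ
            HopfAlgebra.antipode (R := K)).compl₂
          (TensorProduct.lift
            (((LinearMap.lsmul K A) ∘ₗ (Matrix.entryLinearMap K K k l) ∘ₗ π.toLinearMap).compl₂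
              (LinearMap.mulRight K (matrixCoeffTensor K π a l j)))))) ∘ₗ
      (TensorProduct.assoc K A A A).toLinearMap
    = TensorProduct.lift
        (((LinearMap.lsmul K A) ∘ₗ (Matrix.entryLinearMap K K i l) ∘ₗ π.toLinearMap ∘ₗ
            (LinearMap.mul' K A) ∘ₗ (HopfAlgebra.antipode (R := K)).rTensor A).compl₂
          (LinearMap.mulRight K (matrixCoeffTensor K π a l j))) := by
  ext u v w
  simp [Matrix.mul_apply, map_mul, Finset.sum_smul, smul_smul]
  exact Finset.sum_congr rfl fun x _ => by rw [mul_comm]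

lemma step6 (c : A) (i l : n) :
    (((LinearMap.lsmul K A) ∘ₗ (Matrix.entryLinearMap K K i l) ∘ₗ π.toLinearMap ∘ₗ
        (LinearMap.mul' K A) ∘ₗ (HopfAlgebra.antipode (R := K)).rTensor A).compl₂
          (LinearMap.mulRight K c)) ∘ₗ ((Coalgebra.comul (R := K) (A := A)))
      = if i = l then
          ((LinearMap.lsmul K A) ∘ₗ (Coalgebra.counit (R := K) (A := A))).compl₂
            (LinearMap.mulRight K c)
        else 0 := by
  apply LinearMap.ext; intro u; apply LinearMap.ext; intro y
  have h := HopfAlgebra.mul_antipode_rTensor_comul_apply (R := K) (A := A) u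
  simp only [LinearMap.coe_comp, Function.comp_apply, LinearMap.compl₂_apply,
    LinearMap.mulRight_apply, LinearMap.lsmul_apply, Matrix.entryLinearMap_apply,
    AlgHom.toLinearMap_apply, h, AlgHom.commutes, Matrix.algebraMap_matrix_apply]
  split <;> simp

lemma step7 (c : A) :
    TensorProduct.lift
        (((LinearMap.lsmul K A) ∘ₗ (Coalgebra.counit (R := K) (A := A))).compl₂
          (LinearMap.mulRight K c))
      = LinearMap.mulRight K c ∘ₗ (TensorProduct.lid K A).toLinearMap ∘ₗ
          (Coalgebra.counit (R := K) (A := A)).rTensor A := by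
  ext u w
  simp [smul_mul_assoc]

lemma lift_zero' {M N P : Type*} [AddCommMonoid M] [AddCommMonoid N] [AddCommMonoid P]
    [Module K M] [Module K N] [Module K P] :
    TensorProduct.lift (0 : M →ₗ[K] N →ₗ[K] P) = 0 := by
  ext u v; simp

lemma lift_compl₂_apply {M N N' N'' P : Type*} [AddCommMonoid M] [AddCommMonoid N]
    [AddCommMonoid N'] [AddCommMonoid N''] [AddCommMonoid P]
    [Module K M] [Module K N] [Module K N'] [Module K N''] [Module K P]
    (B : M →ₗ[K] N →ₗ[K] P) (g : N' →ₗ[K] N) (f : N'' →ₗ[K] N') (z : M ⊗[K] N'') :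
    TensorProduct.lift (B.compl₂ g) (LinearMap.lTensor M f z)
      = TensorProduct.lift (B.compl₂ (g ∘ₗ f)) z := by
  rw [compl₂_comp_right, lift_compl₂ (B := B.compl₂ g) (f := f)]; rfl

lemma lift_comp₁_apply {M M' N P : Type*} [AddCommMonoid M] [AddCommMonoid M']
    [AddCommMonoid N] [AddCommMonoid P] [Module K M] [Module K M'] [Module K N] [Module K P]
    (B : M →ₗ[K] N →ₗ[K] P) (f : M' →ₗ[K] M) (z : M' ⊗[K] N) :
    TensorProduct.lift B (LinearMap.rTensor N f z) = TensorProduct.lift (B ∘ₗ f) z := by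
  rw [lift_compl₁ (B := B) (f := f)]; rfl

end Helpers

/-- let `A` be a Hopf algebra over `K`, `π : A → Matrix n n K` a `K`-algebra
homomorphism and `a ∈ A ⊗ A` an element commuting with all coproducts `Δ(x)`.  Setting
`a_{ij} = (π_{ij} ⊗ id)(a)`, one has, for all `x ∈ A` and all indices `i, j`,
`x · a_{ij} = Σ_{k,l} Σ π_{ik}(S(x₍₁₎)) · π_{lj}(x₍₂₎) • (a_{kl} · x₍₃₎)`,
where the Sweedler sum runs over the iterated comultiplication
`(Δ ⊗ id)(Δ(x)) = Σ x₍₁₎ ⊗ x₍₂₎ ⊗ x₍₃₎`: the right-hand side is the image of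
`(Δ ⊗ id)(Δ(x)) ∈ (A ⊗ A) ⊗ A` under the linear map induced by
`(u ⊗ v) ⊗ w ↦ (π(S u))_{ik} (π v)_{lj} • (a_{kl} · w)`, summed over `k, l`. -/
theorem mul_matrixCoeffTensor {K A n : Type*} [CommRing K] [Ring A] [HopfAlgebra K A]
    [Fintype n] [DecidableEq n]
    (π : A →ₐ[K] Matrix n n K) (a : A ⊗[K] A)
    (ha : ∀ x : A, a * Coalgebra.comul x = Coalgebra.comul x * a)
    (x : A) (i j : n) :
    x * matrixCoeffTensor K π a i j
      = ∑ k : n, ∑ l : n,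
          TensorProduct.lift
            (((LinearMap.lsmul K A) ∘ₗ dualRepCoeff K π i k l j).compl₂
              (LinearMap.mulLeft K (matrixCoeffTensor K π a k l)))
            ((LinearMap.rTensor A (Coalgebra.comul (R := K) (A := A))) (Coalgebra.comul x)) := by
  classical
  symm
  have hswap : ∀ k : n,
      ((TensorProduct.lift ((LinearMap.lsmul K A) ∘ₗ (Matrix.entryLinearMap K K k j) ∘ₗ
          π.toLinearMap)) ∘ₗ LinearMap.mulLeft K a) ∘ₗ (Coalgebra.comul (R := K) (A := A))
      = ((TensorProduct.lift ((LinearMap.lsmul K A) ∘ₗ (Matrix.entryLinearMap K K k j) ∘ₗ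
          π.toLinearMap)) ∘ₗ LinearMap.mulRight K a) ∘ₗ (Coalgebra.comul (R := K) (A := A)) := by
    intro k
    apply LinearMap.ext; intro y
    simp [ha y]
  calc
    ∑ k : n, ∑ l : n,
        TensorProduct.lift
          (((LinearMap.lsmul K A) ∘ₗ dualRepCoeff K π i k l j).compl₂
            (LinearMap.mulLeft K (matrixCoeffTensor K π a k l)))
          ((LinearMap.rTensor A (Coalgebra.comul (R := K) (A := A))) (Coalgebra.comul x))
      = ∑ k : n, ∑ l : n,
          TensorProduct.lift
            ((((LinearMap.lsmul K A) ∘ₗ (Matrix.entryLinearMap K K i k) ∘ₗ π.toLinearMap ∘ₗ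
                HopfAlgebra.antipode (R := K)).compl₂
              (TensorProduct.lift
                (((LinearMap.lsmul K A) ∘ₗ (Matrix.entryLinearMap K K k l) ∘ₗ
                    π.toLinearMap).compl₂
                  (LinearMap.mulRight K (matrixCoeffTensor K π a l j))))))
            ((TensorProduct.assoc K A A A)
              ((LinearMap.rTensor A (Coalgebra.comul (R := K) (A := A)))
                (Coalgebra.comul x))) := by
        refine Finset.sum_congr rfl fun k _ => ?_
        rw [← Coalgebra.coassoc_symm_apply x, LinearEquiv.apply_symm_apply,
          ← LinearMap.sum_apply]
        have h1 := LinearMap.congr_fun (step1 π a i j k)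
          ((Coalgebra.comul (R := K) (A := A)).lTensor A (Coalgebra.comul x))
        simp only [LinearMap.comp_apply, LinearEquiv.coe_coe] at h1
        have hsc : (∑ l : n, TensorProduct.lift
              (((LinearMap.lsmul K A) ∘ₗ (Matrix.entryLinearMap K K k l) ∘ₗ
                  π.toLinearMap).compl₂
                (LinearMap.mulRight K (matrixCoeffTensor K π a l j)))) ∘ₗ
              (Coalgebra.comul (R := K) (A := A))
            = ∑ l : n, (TensorProduct.lift
              (((LinearMap.lsmul K A) ∘ₗ (Matrix.entryLinearMap K K k l) ∘ₗ
                  π.toLinearMap).compl₂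
                (LinearMap.mulRight K (matrixCoeffTensor K π a l j)))) ∘ₗ
              (Coalgebra.comul (R := K) (A := A)) :=
          LinearMap.ext fun y => by simp
        rw [h1, lift_compl₂_apply, hswap k, step4 π a j k, hsc, compl₂_sum,
          lift_sum, LinearMap.sum_apply]
        refine Finset.sum_congr rfl fun l _ => ?_
        rw [← lift_compl₂_apply]
    _ = ∑ l : n,
          TensorProduct.lift
            ((((LinearMap.lsmul K A) ∘ₗ (Matrix.entryLinearMap K K i l) ∘ₗ π.toLinearMap ∘ₗ
                (LinearMap.mul' K A) ∘ₗ (HopfAlgebra.antipode (R := K)).rTensor A).compl₂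
              (LinearMap.mulRight K (matrixCoeffTensor K π a l j))) ∘ₗ
                (Coalgebra.comul (R := K) (A := A)))
            (Coalgebra.comul x) := by
        rw [Finset.sum_comm]
        refine Finset.sum_congr rfl fun l _ => ?_
        rw [← LinearMap.sum_apply]
        have h5 := LinearMap.congr_fun (step5 π a i j l)
          ((LinearMap.rTensor A (Coalgebra.comul (R := K) (A := A))) (Coalgebra.comul x))
        simp only [LinearMap.comp_apply, LinearEquiv.coe_coe] at h5
        rw [h5, lift_comp₁_apply]
    _ = TensorProduct.lift
          (((LinearMap.lsmul K A) ∘ₗ (Coalgebra.counit (R := K) (A := A))).compl₂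
            (LinearMap.mulRight K (matrixCoeffTensor K π a i j)))
          (Coalgebra.comul x) := by
        rw [show (∑ l : n, TensorProduct.lift
            ((((LinearMap.lsmul K A) ∘ₗ (Matrix.entryLinearMap K K i l) ∘ₗ π.toLinearMap ∘ₗ
                (LinearMap.mul' K A) ∘ₗ (HopfAlgebra.antipode (R := K)).rTensor A).compl₂
              (LinearMap.mulRight K (matrixCoeffTensor K π a l j))) ∘ₗ
                (Coalgebra.comul (R := K) (A := A)))
            (Coalgebra.comul x)) = _ from Finset.sum_congr rfl fun l _ => by
          rw [step6 π (matrixCoeffTensor K π a l j) i l, apply_ite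
            (fun B : A →ₗ[K] A →ₗ[K] A => TensorProduct.lift B (Coalgebra.comul x)),
            lift_zero']]
        simp [Finset.sum_ite_eq]
    _ = x * matrixCoeffTensor K π a i j := by
        rw [step7, LinearMap.comp_apply, LinearMap.comp_apply,
          Coalgebra.rTensor_counit_comul]
        simp
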